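/- Assume D(A_B) is dense in H, μ₀ ∈ ρ(A_B), and there exists a sequence (z_n) in ρ(A_B) with |z_n| → ∞ such that the operators z_n(A_B − z_n I)^{−1} are uniformly bounded in norm. Then the closure of 𝒮 is a regular invariant subspace of the resolvent of A_B: for every μ ∈ ρ(A_B), the closure of (A_B − μI)^{−1}(closure of 𝒮) equals the closure of 𝒮. -/
import Mathlib


open scoped InnerProductSpace

variable {H 𝓗 𝓚 : Type*}
  [NormedAddCommGroup H] [InnerProductSpace ℂ H] [CompleteSpace H]
  [NormedAddCommGroup 𝓗] [InnerProductSpace ℂ 𝓗] [CompleteSpace 𝓗]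
  [NormedAddCommGroup 𝓚] [InnerProductSpace ℂ 𝓚] [CompleteSpace 𝓚]

/-- `R` is the (bounded, everywhere defined) inverse of `A_B − λ`, where `A_B` is the
restriction of `T` to `{u ∈ D(T) : Γ₁ u = B (Γ₂ u)}`. -/
def IsResolventAt (dom : Submodule ℂ H) (T : dom →ₗ[ℂ] H)
    (Γ₁ : dom →ₗ[ℂ] 𝓗) (Γ₂ : dom →ₗ[ℂ] 𝓚) (B : 𝓚 →L[ℂ] 𝓗)
    (lam : ℂ) (R : H →L[ℂ] H) : Prop :=
  (∀ h : H, ∃ hm : R h ∈ dom,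
      Γ₁ ⟨R h, hm⟩ = B (Γ₂ ⟨R h, hm⟩) ∧ T ⟨R h, hm⟩ - lam • R h = h) ∧
  (∀ u : dom, Γ₁ u = B (Γ₂ u) → R (T u - lam • (u : H)) = (u : H))

/-- The resolvent set `ρ(A_B)`. -/
def resolventSetB (dom : Submodule ℂ H) (T : dom →ₗ[ℂ] H)
    (Γ₁ : dom →ₗ[ℂ] 𝓗) (Γ₂ : dom →ₗ[ℂ] 𝓚) (B : 𝓚 →L[ℂ] 𝓗) : Set ℂ :=
  {lam | ∃ R : H →L[ℂ] H, IsResolventAt dom T Γ₁ Γ₂ B lam R}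

/-- The space `𝒮 = Span_{δ ∉ σ(A_B)} (A_B − δ)⁻¹ Ran (S_{μ₀,B})`. -/
def spaceS (dom : Submodule ℂ H) (T : dom →ₗ[ℂ] H)
    (Γ₁ : dom →ₗ[ℂ] 𝓗) (Γ₂ : dom →ₗ[ℂ] 𝓚) (B : 𝓚 →L[ℂ] 𝓗) (μ₀ : ℂ) :
    Submodule ℂ H :=
  Submodule.span ℂ {x : H | ∃ (δ : ℂ) (R : H →L[ℂ] H) (v : dom),
    IsResolventAt dom T Γ₁ Γ₂ B δ R ∧ T v = μ₀ • (v : H) ∧ x = R (v : H)}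

/-- The space `𝒯 = Span_{μ ∉ σ(A_B)} Ran (S_{μ,B})`. -/
def spaceT (dom : Submodule ℂ H) (T : dom →ₗ[ℂ] H)
    (Γ₁ : dom →ₗ[ℂ] 𝓗) (Γ₂ : dom →ₗ[ℂ] 𝓚) (B : 𝓚 →L[ℂ] 𝓗) :
    Submodule ℂ H :=
  Submodule.span ℂ {x : H | ∃ (μ : ℂ) (hx : x ∈ dom),
    μ ∈ resolventSetB dom T Γ₁ Γ₂ B ∧ T ⟨x, hx⟩ = μ • x}

set_option linter.unusedSectionVars false
set_option maxHeartbeats 800000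

section Aux

variable {dom : Submodule ℂ H} {T : dom →ₗ[ℂ] H}
    {Γ₁ : dom →ₗ[ℂ] 𝓗} {Γ₂ : dom →ₗ[ℂ] 𝓚} {B : 𝓚 →L[ℂ] 𝓗}

lemma res_unique {lam : ℂ} {R₁ R₂ : H →L[ℂ] H}
    (h₁ : IsResolventAt dom T Γ₁ Γ₂ B lam R₁)
    (h₂ : IsResolventAt dom T Γ₁ Γ₂ B lam R₂) : R₁ = R₂ := by
  ext x
  obtain ⟨hm, hΓ, hT⟩ := h₂.1 x
  have h := h₁.2 ⟨R₂ x, hm⟩ hΓ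
  simpa [hT] using h

lemma res_identity {l₁ l₂ : ℂ} {R₁ R₂ : H →L[ℂ] H}
    (h₁ : IsResolventAt dom T Γ₁ Γ₂ B l₁ R₁)
    (h₂ : IsResolventAt dom T Γ₁ Γ₂ B l₂ R₂) (x : H) :
    (l₂ - l₁) • R₁ (R₂ x) = R₂ x - R₁ x := by
  obtain ⟨hm, hΓ, hT⟩ := h₂.1 x
  have h := h₁.2 ⟨R₂ x, hm⟩ hΓ
  have e : T ⟨R₂ x, hm⟩ - l₁ • R₂ x = x + (l₂ - l₁) • R₂ x := by
    have hTu : T ⟨R₂ x, hm⟩ = x + l₂ • R₂ x := sub_eq_iff_eq_add.mp hT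
    rw [hTu, sub_smul]; abel
  rw [e, map_add, map_smul] at h
  rw [eq_sub_iff_add_eq, add_comm]
  exact h

lemma res_shift {μ : ℂ} {R' : H →L[ℂ] H}
    (hR' : IsResolventAt dom T Γ₁ Γ₂ B μ R')
    (c : ℂ) (hc : ‖c‖ * ‖R'‖ ≤ 1/2) :
    ∃ Rc : H →L[ℂ] H, IsResolventAt dom T Γ₁ Γ₂ B (μ + c) Rc ∧
      ∀ x, ‖Rc x - R' x‖ ≤ 2 * ‖c‖ * ‖R'‖ * ‖R' x‖ := by
  have hcR : ‖c • R'‖ ≤ 1/2 := by rw [norm_smul]; exact hc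
  have hlt : ‖c • R'‖ < 1 := lt_of_le_of_lt hcR (by norm_num)
  set W : (H →L[ℂ] H)ˣ := Units.oneSub (c • R') hlt with hWdef
  have hWval : (W : H →L[ℂ] H) = 1 - c • R' := rfl
  set V : H →L[ℂ] H := ↑W⁻¹ with hVdef
  have hWV : ∀ x : H, (W : H →L[ℂ] H) (V x) = x := by
    intro x
    have h : (W : H →L[ℂ] H) * V = 1 := W.mul_inv
    calc (W : H →L[ℂ] H) (V x) = ((W : H →L[ℂ] H) * V) x := rfl
      _ = x := by rw [h]; rfl
  have hVW : ∀ x : H, V ((W : H →L[ℂ] H) x) = x := by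
    intro x
    have h : V * (W : H →L[ℂ] H) = 1 := W.inv_mul
    calc V ((W : H →L[ℂ] H) x) = (V * (W : H →L[ℂ] H)) x := rfl
      _ = x := by rw [h]; rfl
  refine ⟨R'.comp V, ⟨?_, ?_⟩, ?_⟩
  · intro h
    obtain ⟨hm, hΓ, hT⟩ := hR'.1 (V h)
    refine ⟨hm, hΓ, ?_⟩
    show T ⟨R' (V h), hm⟩ - (μ + c) • R' (V h) = h
    calc T ⟨R' (V h), hm⟩ - (μ + c) • R' (V h)
        = (T ⟨R' (V h), hm⟩ - μ • R' (V h)) - c • R' (V h) := by rw [add_smul]; abel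
      _ = V h - c • R' (V h) := by rw [hT]
      _ = ((1 : H →L[ℂ] H) - c • R') (V h) := by
          simp [ContinuousLinearMap.sub_apply]
      _ = (W : H →L[ℂ] H) (V h) := by rw [hWval]
      _ = h := hWV h
  · intro u hΓ
    have h2 := hR'.2 u hΓ
    have e : T u - (μ + c) • (u : H) = (W : H →L[ℂ] H) (T u - μ • (u : H)) := by
      rw [hWval]
      simp only [ContinuousLinearMap.sub_apply, ContinuousLinearMap.smul_apply,
        ContinuousLinearMap.one_apply, h2, add_smul]
      abel
    show R' (V (T u - (μ + c) • (u : H))) = (u : H)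
    rw [e, hVW]
    exact h2
  · intro x
    have hid : V = 1 + V * (c • R') := by
      have h : V * ((W : H →L[ℂ] H)) = 1 := W.inv_mul
      rw [hWval, mul_sub, mul_one] at h
      exact sub_eq_iff_eq_add.mp h
    have hVnorm : ‖V‖ ≤ 2 := by
      have h1 : ‖V‖ ≤ ‖(1 : H →L[ℂ] H)‖ + ‖V * (c • R')‖ := by
        conv_lhs => rw [hid]
        exact norm_add_le _ _
      have h2 : ‖V * (c • R')‖ ≤ ‖V‖ * ‖c • R'‖ := norm_mul_le _ _
      have h3 : ‖(1 : H →L[ℂ] H)‖ ≤ 1 := ContinuousLinearMap.norm_id_le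
      nlinarith [norm_nonneg V, norm_nonneg (c • R')]
    have hdiff : R'.comp V x - R' x = c • R' (V (R' x)) := by
      have e1 : V x - x = c • V (R' x) := by
        conv_lhs => rw [hid]
        simp [ContinuousLinearMap.add_apply, ContinuousLinearMap.mul_apply]
      calc R'.comp V x - R' x = R' (V x - x) := by rw [map_sub]; rfl
        _ = R' (c • V (R' x)) := by rw [e1]
        _ = c • R' (V (R' x)) := by rw [map_smul]
    rw [hdiff, norm_smul]
    have b1 : ‖R' (V (R' x))‖ ≤ ‖R'‖ * (‖V‖ * ‖R' x‖) :=
      le_trans (R'.le_opNorm _) (by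
        have := V.le_opNorm (R' x)
        nlinarith [norm_nonneg R'])
    have b2 : ‖c‖ * ‖R' (V (R' x))‖ ≤ ‖c‖ * (‖R'‖ * (‖V‖ * ‖R' x‖)) :=
      mul_le_mul_of_nonneg_left b1 (norm_nonneg c)
    have b3 : 0 ≤ ‖c‖ * ‖R'‖ * ‖R' x‖ :=
      mul_nonneg (mul_nonneg (norm_nonneg c) (norm_nonneg R')) (norm_nonneg (R' x))
    nlinarith [b2, b3, hVnorm]

lemma strong_lim
    (hdense : Dense {x : H | ∃ hx : x ∈ dom, Γ₁ ⟨x, hx⟩ = B (Γ₂ ⟨x, hx⟩)})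
    {z : ℕ → ℂ} {R : ℕ → (H →L[ℂ] H)} {M : ℝ}
    (hzres : ∀ n, IsResolventAt dom T Γ₁ Γ₂ B (z n) (R n))
    (hzinf : Filter.Tendsto (fun n => ‖z n‖) Filter.atTop Filter.atTop)
    (hbdd : ∀ n, ‖z n • R n‖ ≤ M) (x : H) :
    Filter.Tendsto (fun n => z n • (R n) x + x) Filter.atTop (nhds 0) := by
  have hM0 : (0:ℝ) ≤ M := le_trans (norm_nonneg _) (hbdd 0)
  have hsm : ∀ (n : ℕ) (y : H), ‖z n • (R n) y‖ ≤ M * ‖y‖ := by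
    intro n y
    calc ‖z n • (R n) y‖ = ‖(z n • R n) y‖ := by rw [ContinuousLinearMap.smul_apply]
      _ ≤ ‖z n • R n‖ * ‖y‖ := ContinuousLinearMap.le_opNorm _ _
      _ ≤ M * ‖y‖ := mul_le_mul_of_nonneg_right (hbdd n) (norm_nonneg y)
  have hcore : ∀ (y : H) (hy : y ∈ dom), Γ₁ ⟨y, hy⟩ = B (Γ₂ ⟨y, hy⟩) →
      Filter.Tendsto (fun n => z n • (R n) y + y) Filter.atTop (nhds 0) := by
    intro y hy hΓ
    have heq : ∀ n, z n • (R n) y + y = (R n) (T ⟨y, hy⟩) := by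
      intro n
      have h := (hzres n).2 ⟨y, hy⟩ hΓ
      rw [map_sub, map_smul] at h
      rw [sub_eq_iff_eq_add] at h
      rw [h]; abel
    have hg : Filter.Tendsto (fun n => M * ‖T ⟨y, hy⟩‖ * ‖z n‖⁻¹)
        Filter.atTop (nhds 0) := by
      have := hzinf.inv_tendsto_atTop
      simpa using this.const_mul (M * ‖T ⟨y, hy⟩‖)
    apply squeeze_zero_norm' ?_ hg
    filter_upwards [hzinf.eventually_ge_atTop 1] with n hn
    rw [heq n]
    have hzpos : (0:ℝ) < ‖z n‖ := lt_of_lt_of_le one_pos hn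
    have h1 := hsm n (T ⟨y, hy⟩)
    rw [norm_smul] at h1
    calc ‖(R n) (T ⟨y, hy⟩)‖ = ‖z n‖⁻¹ * (‖z n‖ * ‖(R n) (T ⟨y, hy⟩)‖) := by
          rw [inv_mul_cancel_left₀ hzpos.ne']
      _ ≤ ‖z n‖⁻¹ * (M * ‖T ⟨y, hy⟩‖) :=
          mul_le_mul_of_nonneg_left h1 (by positivity)
      _ = M * ‖T ⟨y, hy⟩‖ * ‖z n‖⁻¹ := by ring
  rw [Metric.tendsto_atTop]
  intro ε hε
  have hd3 : (0:ℝ) < ε / (3 * (M + 1)) := by positivity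
  obtain ⟨y, ⟨hy, hΓ⟩, hdist⟩ := Metric.mem_closure_iff.mp (hdense x) _ hd3
  rw [dist_eq_norm] at hdist
  obtain ⟨N, hN⟩ := Metric.tendsto_atTop.mp (hcore y hy hΓ) (ε/3) (by positivity)
  refine ⟨N, fun n hn => ?_⟩
  rw [dist_zero_right]
  have hsplit : z n • (R n) x + x
      = (z n • (R n) (x - y) + (x - y)) + (z n • (R n) y + y) := by
    rw [map_sub, smul_sub]; abel
  have hb1 : ‖z n • (R n) (x - y)‖ ≤ M * ‖x - y‖ := hsm n (x - y)
  have hb2 : ‖z n • (R n) y + y‖ < ε/3 := by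
    have := hN n hn; rwa [dist_zero_right] at this
  have hb3 : (M + 1) * ‖x - y‖ < ε / 3 := by
    have := mul_lt_mul_of_pos_left hdist (show (0:ℝ) < M + 1 by linarith)
    calc (M + 1) * ‖x - y‖ < (M + 1) * (ε / (3 * (M + 1))) := this
      _ = ε / 3 := by field_simp
  calc ‖z n • (R n) x + x‖
      = ‖(z n • (R n) (x - y) + (x - y)) + (z n • (R n) y + y)‖ := by rw [hsplit]
    _ ≤ ‖z n • (R n) (x - y) + (x - y)‖ + ‖z n • (R n) y + y‖ := norm_add_le _ _
    _ ≤ (‖z n • (R n) (x - y)‖ + ‖x - y‖) + ‖z n • (R n) y + y‖ := by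
        gcongr; exact norm_add_le _ _
    _ < ε := by nlinarith [norm_nonneg (x - y)]

end Aux

theorem stmt5 (dom : Submodule ℂ H) (T : dom →ₗ[ℂ] H)
    (Γ₁ : dom →ₗ[ℂ] 𝓗) (Γ₂ : dom →ₗ[ℂ] 𝓚) (B : 𝓚 →L[ℂ] 𝓗) (μ₀ : ℂ)
    (hdense : Dense {x : H | ∃ hx : x ∈ dom, Γ₁ ⟨x, hx⟩ = B (Γ₂ ⟨x, hx⟩)})
    (hμ₀ : μ₀ ∈ resolventSetB dom T Γ₁ Γ₂ B)
    (z : ℕ → ℂ) (R : ℕ → (H →L[ℂ] H)) (M : ℝ)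
    (hzres : ∀ n, IsResolventAt dom T Γ₁ Γ₂ B (z n) (R n))
    (hzinf : Filter.Tendsto (fun n => ‖z n‖) Filter.atTop Filter.atTop)
    (hbdd : ∀ n, ‖z n • R n‖ ≤ M) :
    ∀ μ : ℂ, ∀ R' : H →L[ℂ] H, IsResolventAt dom T Γ₁ Γ₂ B μ R' →
      closure (R' '' closure (spaceS dom T Γ₁ Γ₂ B μ₀ : Set H)) =
        closure (spaceS dom T Γ₁ Γ₂ B μ₀ : Set H) := by
  intro μ R' hR'
  set S : Submodule ℂ H := spaceS dom T Γ₁ Γ₂ B μ₀ with hSdef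
  set Scl : Submodule ℂ H := S.topologicalClosure with hScldef
  have hSclcoe : (Scl : Set H) = closure (S : Set H) := S.topologicalClosure_coe
  have hgen : ∀ (δ : ℂ) (Rδ : H →L[ℂ] H) (v : dom),
      IsResolventAt dom T Γ₁ Γ₂ B δ Rδ → T v = μ₀ • (v : H) → Rδ (v : H) ∈ S :=
    fun δ Rδ v h1 h2 => Submodule.subset_span ⟨δ, Rδ, v, h1, h2, rfl⟩
  -- eigenvectors lie in the closure of S
  have hveig : ∀ v : dom, T v = μ₀ • (v : H) → (v : H) ∈ closure (S : Set H) := by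
    intro v hv
    have hlim := strong_lim hdense hzres hzinf hbdd (v : H)
    have h2 : Filter.Tendsto (fun n => -(z n • (R n) (v : H) + (v : H)) + (v : H))
        Filter.atTop (nhds (-(0:H) + (v : H))) := hlim.neg.add_const _
    have hfn : (fun n => -(z n • (R n) (v : H) + (v : H)) + (v : H))
        = fun n => -(z n • (R n) (v : H)) := by funext n; abel
    rw [hfn, neg_zero, zero_add] at h2
    refine mem_closure_of_tendsto h2 (Filter.Eventually.of_forall fun n => ?_)
    exact S.neg_mem (S.smul_mem _ (hgen (z n) (R n) v (hzres n) hv))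
  -- forward inclusion : R' maps S into the closure of S
  have hfwd : ∀ s ∈ S, R' s ∈ closure (S : Set H) := by
    have hle : S ≤ Submodule.comap (R'.toLinearMap) Scl := by
      refine Submodule.span_le.mpr ?_
      rintro x ⟨δ, Rδ, v, hres, hv, rfl⟩
      simp only [SetLike.mem_coe, Submodule.mem_comap, ContinuousLinearMap.coe_coe]
      by_cases hδ : δ = μ
      · rw [hδ] at hres
        have hRδ : Rδ = R' := res_unique hres hR'
        rw [hRδ]
        rw [← SetLike.mem_coe, hSclcoe, Metric.mem_closure_iff]
        intro ε hε
        set K : ℝ := ‖R'‖ + 1 with hKdef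
        have hKpos : (0:ℝ) < K := by positivity
        set X : ℝ := K^3 * (‖(v : H)‖ + 1) with hXdef
        have hXpos : (0:ℝ) < X := by positivity
        set c0 : ℝ := min ((2*K)⁻¹) (ε / (4 * X)) with hc0def
        have hc0pos : (0:ℝ) < c0 := lt_min (by positivity) (by positivity)
        have hcnorm : ‖(c0 : ℂ)‖ = c0 := by
          rw [Complex.norm_real, Real.norm_eq_abs, abs_of_pos hc0pos]
        have hsmall : ‖(c0 : ℂ)‖ * ‖R'‖ ≤ 1/2 := by
          rw [hcnorm]
          have h1 : c0 ≤ (2*K)⁻¹ := min_le_left _ _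
          have h2 : ‖R'‖ ≤ K := by rw [hKdef]; linarith
          calc c0 * ‖R'‖ ≤ (2*K)⁻¹ * K :=
                mul_le_mul h1 h2 (norm_nonneg _) (by positivity)
            _ = 1/2 := by field_simp
        obtain ⟨Rc, hRc, hbound⟩ := res_shift hR' (c0 : ℂ) hsmall
        have hcne : (μ + (c0 : ℂ)) - μ ≠ 0 := by
          simp only [add_sub_cancel_left, ne_eq, Complex.ofReal_eq_zero]
          exact hc0pos.ne'
        have hid := res_identity hR' hRc (v : H)
        have hsS : R' (Rc (v : H)) ∈ S := by
          have heq : R' (Rc (v : H)) = ((μ + (c0:ℂ)) - μ)⁻¹ • (Rc (v:H) - R' (v:H)) := by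
            rw [← hid, smul_smul, inv_mul_cancel₀ hcne, one_smul]
          rw [heq]
          exact S.smul_mem _ (S.sub_mem (hgen _ Rc v hRc hv) (hgen μ R' v hR' hv))
        refine ⟨R' (Rc (v : H)), hsS, ?_⟩
        rw [dist_eq_norm]
        have h1 : ‖R' (R' (v:H)) - R' (Rc (v:H))‖ ≤ ‖R'‖ * ‖R' (v:H) - Rc (v:H)‖ := by
          rw [← map_sub]; exact R'.le_opNorm _
        have h2 : ‖Rc (v:H) - R' (v:H)‖ ≤ 2 * c0 * ‖R'‖ * ‖R' (v:H)‖ := by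
          have := hbound (v : H); rwa [hcnorm] at this
        have hRK : ‖R'‖ ≤ K := by rw [hKdef]; linarith
        have hRvK : ‖R' (v:H)‖ ≤ K * (‖(v:H)‖ + 1) := by
          have h3 := R'.le_opNorm (v : H)
          have h4 : ‖R'‖ * ‖(v:H)‖ ≤ K * (‖(v:H)‖ + 1) := by
            nlinarith [norm_nonneg (v:H), norm_nonneg R']
          linarith
        have key2 : c0 * (4 * X) ≤ ε := by
          have := min_le_right ((2*K)⁻¹) (ε / (4 * X))
          rw [← hc0def] at this
          calc c0 * (4 * X) ≤ (ε / (4 * X)) * (4 * X) :=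
                mul_le_mul_of_nonneg_right this (by positivity)
            _ = ε := by field_simp
        calc ‖R' (R' (v:H)) - R' (Rc (v:H))‖
            ≤ ‖R'‖ * ‖R' (v:H) - Rc (v:H)‖ := h1
          _ = ‖R'‖ * ‖Rc (v:H) - R' (v:H)‖ := by rw [norm_sub_rev]
          _ ≤ ‖R'‖ * (2 * c0 * ‖R'‖ * ‖R' (v:H)‖) := by
              exact mul_le_mul_of_nonneg_left h2 (norm_nonneg R')
          _ ≤ K * (2 * c0 * K * (K * (‖(v:H)‖ + 1))) := by
              gcongr <;> first
                | positivity
                | exact hRK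
                | exact hRvK
                | exact norm_nonneg _
          _ = 2 * c0 * X := by rw [hXdef]; ring
          _ < ε := by nlinarith [hc0pos, hXpos]
      · have hid := res_identity hR' hres (v : H)
        have hne : δ - μ ≠ 0 := sub_ne_zero.mpr hδ
        have heq : R' (Rδ (v:H)) = (δ - μ)⁻¹ • (Rδ (v:H) - R' (v:H)) := by
          rw [← hid, smul_smul, inv_mul_cancel₀ hne, one_smul]
        rw [heq]
        exact Submodule.le_topologicalClosure S
          (S.smul_mem _ (S.sub_mem (hgen δ Rδ v hres hv) (hgen μ R' v hR' hv)))
    intro s hs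
    have := hle hs
    rw [Submodule.mem_comap] at this
    rw [← hSclcoe]
    exact this
  -- the two inclusions
  apply Set.Subset.antisymm
  · apply closure_minimal ?_ isClosed_closure
    intro y hy
    obtain ⟨x, hx, rfl⟩ := hy
    have h1 : R' x ∈ closure (R' '' (S : Set H)) :=
      image_closure_subset_closure_image R'.continuous ⟨x, hx, rfl⟩
    refine closure_minimal ?_ isClosed_closure h1
    rintro _ ⟨s, hs, rfl⟩
    exact hfwd s hs
  · set Q : Submodule ℂ H := (Scl.map R'.toLinearMap).topologicalClosure with hQdef
    have hQcoe : (Q : Set H) = closure (R' '' (Scl : Set H)) := by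
      rw [hQdef, Submodule.topologicalClosure_coe]
      congr 1
    have hSQ : S ≤ Q := by
      refine Submodule.span_le.mpr ?_
      rintro x ⟨δ, Rδ, v, hres, hv, rfl⟩
      apply Submodule.le_topologicalClosure
      refine ⟨(v : H) + (δ - μ) • Rδ (v : H), ?_, ?_⟩
      · have h1 : (v : H) ∈ Scl := by rw [← SetLike.mem_coe, hSclcoe]; exact hveig v hv
        exact Scl.add_mem h1
          (Scl.smul_mem _ (Submodule.le_topologicalClosure S (hgen δ Rδ v hres hv)))
      · obtain ⟨hm, hΓ, hT⟩ := hres.1 (v : H)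
        have h2 := hR'.2 ⟨Rδ (v : H), hm⟩ hΓ
        have e : T ⟨Rδ (v:H), hm⟩ - μ • Rδ (v:H) = (v:H) + (δ - μ) • Rδ (v:H) := by
          have hTu : T ⟨Rδ (v:H), hm⟩ = (v:H) + δ • Rδ (v:H) := sub_eq_iff_eq_add.mp hT
          rw [hTu, sub_smul]; abel
        show R' ((v : H) + (δ - μ) • Rδ (v : H)) = Rδ (v : H)
        rw [← e]
        exact h2
    have hQle : Scl ≤ Q :=
      Submodule.topologicalClosure_minimal S hSQ (Submodule.isClosed_topologicalClosure _)
    intro x hx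
    have hx' : x ∈ Scl := by rw [← SetLike.mem_coe, hSclcoe]; exact hx
    have hxQ : x ∈ Q := hQle hx'
    rw [← hSclcoe, ← hQcoe]
    exact hxQ
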